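/- Let d ≥ 3 be an integer and suppose S = ∞ and there exist z̃ > max(s₀,1), constants C₀, C₁ > 0, and exponents γ₀ ∈ [0,1), γ₁ ∈ [0,1] with (2−γ₀)/(2−γ₁) < d/(d−2), such that C₀ z^{γ₀} ≤ m(z) ≤ C₁ z^{γ₁} for all z > z̃. Then there exists a constant C > 0 such that h(z) ≤ C (1 + f(z)^{2d/(d−2)}) for all z > 0. -/

import Mathlib

open MeasureTheory Set Filter Topology

/-!
Concavity and positivity of `m` make `r ↦ m r / r` nonincreasing, so `h` stays bounded for
bounded `z` and `√(2 / m)` is integrable near `0`. For large `z` the lower bound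
`m r ≥ C₀ r ^ γ₀` gives `h z ≲ z ^ (2 - γ₀)`, while the upper bound `m r ≤ C₁ r ^ γ₁` on
`(z / 2, z)` gives `f z ≳ z ^ (1 - γ₁ / 2)`; the exponent condition says precisely
`2 - γ₀ < (1 - γ₁ / 2) · 2d / (d - 2)`.
-/

theorem ContDiffOn.concaveOn_of_deriv2_nonpos {f : ℝ → ℝ} {D : Set ℝ} (hD : Convex ℝ D)
    (hDo : IsOpen D) (hf : ContDiffOn ℝ 2 f D) (hf'' : ∀ x ∈ D, deriv (deriv f) x ≤ 0) :
    ConcaveOn ℝ D f :=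
  concaveOn_of_deriv2_nonpos' hD (hf.differentiableOn (by norm_num))
    ((hf.deriv_of_isOpen hDo (m := 1) (by norm_num)).differentiableOn one_ne_zero) hf''

theorem ConcaveOn.mul_apply_le_mul_apply {m : ℝ → ℝ} (hconc : ConcaveOn ℝ (Ioi 0) m)
    (hnonneg : ∀ x, 0 < x → 0 ≤ m x) {r s : ℝ} (hr : 0 < r) (hrs : r ≤ s) :
    r * m s ≤ s * m r := by
  rcases hrs.eq_or_lt with rfl | hrs
  · rfl
  have hchord : ∀ x ∈ Ioo 0 r, (m s - m r) * (r - x) ≤ m r * (s - r) := by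
    rintro x ⟨hx, hxr⟩
    have hslope := hconc.slope_anti_adjacent hx (hr.trans hrs) hxr hrs
    rw [div_le_div_iff₀ (by linarith) (by linarith)] at hslope
    nlinarith [hnonneg x hx]
  have hlim : Tendsto (fun x => (m s - m r) * (r - x)) (𝓝[>] 0) (𝓝 ((m s - m r) * r)) := by
    have : Continuous fun x : ℝ => (m s - m r) * (r - x) := by fun_prop
    simpa using (this.tendsto 0).mono_left nhdsWithin_le_nhds
  have := le_of_tendsto hlim (eventually_of_mem (Ioo_mem_nhdsGT hr) hchord)
  linarith

theorem ContinuousOn.intervalIntegrable_of_pos {g : ℝ → ℝ} (hg : ContinuousOn g (Ioi 0))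
    {a b : ℝ} (ha : 0 < a) (hb : 0 < b) : IntervalIntegrable g volume a b :=
  (hg.mono fun _ hx => (lt_min ha hb).trans_le hx.1).intervalIntegrable

section

variable {m : ℝ → ℝ}

theorem integrableOn_sqrt_two_div_Ioo (hconc : ConcaveOn ℝ (Ioi 0) m)
    (hpos : ∀ x, 0 < x → 0 < m x) {z : ℝ} (hz : 0 < z) :
    IntegrableOn (fun r => √(2 / m r)) (Ioo 0 z) := by
  have hdom : IntegrableOn (fun r : ℝ => √(2 * z / m z) * r ^ (-(1 / 2) : ℝ)) (Ioo 0 z) :=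
    ((intervalIntegral.intervalIntegrable_rpow' (by norm_num)).1.mono_set
      Ioo_subset_Ioc_self).const_mul _
  have hmeas : ContinuousOn (fun r => √(2 / m r)) (Ioo 0 z) :=
    (continuousOn_const.div ((hconc.continuousOn isOpen_Ioi).mono fun _ hr => hr.1)
      fun r hr => (hpos r hr.1).ne').sqrt
  refine hdom.integrable.mono' (hmeas.aestronglyMeasurable measurableSet_Ioo) ?_
  refine (ae_restrict_iff' measurableSet_Ioo).2 (Eventually.of_forall fun r ⟨hr, hrz⟩ => ?_)
  have hlin := hconc.mul_apply_le_mul_apply (fun x hx => (hpos x hx).le) hr hrz.le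
  have hmr := hpos r hr
  have hmz := hpos z hz
  rw [Real.norm_of_nonneg (Real.sqrt_nonneg _), Real.rpow_neg hr.le, ← Real.sqrt_eq_rpow,
    ← Real.sqrt_inv, ← Real.sqrt_mul (by positivity)]
  refine Real.sqrt_le_sqrt ?_
  rw [← div_eq_mul_inv, div_div, div_le_div_iff₀ hmr (by positivity)]
  nlinarith

/-- Near `0` the integrand is at most `r / m r`, which concavity keeps bounded. -/
theorem abs_integral_sub_div_le (hconc : ConcaveOn ℝ (Ioi 0) m) (hpos : ∀ x, 0 < x → 0 < m x)
    {s₀ Z z : ℝ} (hs₀ : 0 < s₀) (hs₀Z : s₀ ≤ Z) (hz : 0 < z) (hzZ : z ≤ Z) :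
    |∫ r in s₀..z, (z - r) / m r| ≤ Z ^ 3 / (s₀ * m Z) := by
  have hZ := hs₀.trans_le hs₀Z
  have hmZ := hpos Z hZ
  have hbound : ∀ r ∈ uIoc s₀ z, ‖(z - r) / m r‖ ≤ Z ^ 2 / (s₀ * m Z) := by
    rintro r ⟨hr₁, hr₂⟩
    have hr : 0 < r := (lt_min hs₀ hz).trans hr₁
    have hmr := hpos r hr
    have hdist : s₀ * |z - r| ≤ Z * r := by
      rcases le_or_gt z r with hzr | hrz
      · rw [abs_of_nonpos (by linarith)]
        nlinarith
      · have hs₀r : s₀ < r := (min_lt_iff.1 hr₁).resolve_right (by linarith)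
        rw [abs_of_pos (by linarith)]
        nlinarith
    have hlin := hconc.mul_apply_le_mul_apply (fun x hx => (hpos x hx).le) hr
      (hr₂.trans (max_le hs₀Z hzZ))
    rw [Real.norm_eq_abs, abs_div, abs_of_pos hmr, div_le_div_iff₀ hmr (by positivity)]
    nlinarith [mul_le_mul_of_nonneg_right hdist hmZ.le, mul_le_mul_of_nonneg_left hlin hZ.le]
  calc |∫ r in s₀..z, (z - r) / m r| ≤ Z ^ 2 / (s₀ * m Z) * |z - s₀| :=
        intervalIntegral.norm_integral_le_of_norm_le_const hbound
    _ ≤ Z ^ 2 / (s₀ * m Z) * Z := by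
        gcongr
        exact abs_sub_le_iff.2 ⟨by linarith, by linarith⟩
    _ = Z ^ 3 / (s₀ * m Z) := by ring

theorem integral_sub_div_le_mul_integral_inv (hm : ContinuousOn m (Ioi 0))
    (hpos : ∀ x, 0 < x → 0 < m x) {s₀ z : ℝ} (hs₀ : 0 < s₀) (hz : s₀ ≤ z) :
    ∫ r in s₀..z, (z - r) / m r ≤ z * ∫ r in s₀..z, (m r)⁻¹ := by
  have hz0 := hs₀.trans_le hz
  have hinv : ContinuousOn (fun r => (m r)⁻¹) (Ioi 0) := hm.inv₀ fun r hr => (hpos r hr).ne'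
  rw [← intervalIntegral.integral_const_mul]
  refine intervalIntegral.integral_mono_on hz ?_ ?_ fun r hr => ?_
  · exact ((continuousOn_const.sub continuousOn_id).mul hinv).intervalIntegrable_of_pos hs₀ hz0
  · exact (continuousOn_const.mul hinv).intervalIntegrable_of_pos hs₀ hz0
  · rw [div_eq_mul_inv]
    have := hpos r (hs₀.trans_le hr.1)
    gcongr
    linarith [hr.1]

theorem integral_inv_le_of_rpow_le (hm : ContinuousOn m (Ioi 0)) (hpos : ∀ x, 0 < x → 0 < m x)
    {a z C₀ γ₀ : ℝ} (ha : 0 < a) (haz : a ≤ z) (hC₀ : 0 < C₀) (hγ₀ : γ₀ < 1)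
    (hlow : ∀ r, a < r → C₀ * r ^ γ₀ ≤ m r) :
    ∫ r in a..z, (m r)⁻¹ ≤ (C₀ * (1 - γ₀))⁻¹ * z ^ (1 - γ₀) := by
  have hz := ha.trans_le haz
  have hinv : ContinuousOn (fun r => (m r)⁻¹) (Ioi 0) := hm.inv₀ fun r hr => (hpos r hr).ne'
  have hpow : ContinuousOn (fun r : ℝ => C₀⁻¹ * r ^ (-γ₀)) (Ioi 0) :=
    continuousOn_const.mul (continuousOn_id.rpow_const fun r hr => Or.inl (ne_of_gt hr))
  calc ∫ r in a..z, (m r)⁻¹ ≤ ∫ r in a..z, C₀⁻¹ * r ^ (-γ₀) := by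
        refine intervalIntegral.integral_mono_on_of_le_Ioo haz
          (hinv.intervalIntegrable_of_pos ha hz) (hpow.intervalIntegrable_of_pos ha hz)
          fun r hr => ?_
        have hr0 := ha.trans hr.1
        rw [Real.rpow_neg hr0.le, ← mul_inv]
        exact inv_anti₀ (by positivity) (hlow r hr.1)
    _ = (C₀ * (1 - γ₀))⁻¹ * (z ^ (1 - γ₀) - a ^ (1 - γ₀)) := by
        rw [intervalIntegral.integral_const_mul, integral_rpow (Or.inl (by linarith)),
          neg_add_eq_sub, mul_inv, div_eq_mul_inv]
        ring
    _ ≤ (C₀ * (1 - γ₀))⁻¹ * z ^ (1 - γ₀) := by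
        have : 0 < 1 - γ₀ := by linarith
        gcongr
        linarith [Real.rpow_nonneg ha.le (1 - γ₀)]

theorem integral_sub_div_le_mul_rpow (hm : ContinuousOn m (Ioi 0)) (hpos : ∀ x, 0 < x → 0 < m x)
    {s₀ a C₀ γ₀ : ℝ} (hs₀ : 0 < s₀) (hs₀a : s₀ ≤ a) (ha : 1 ≤ a) (hC₀ : 0 < C₀) (hγ₀ : γ₀ < 1)
    (hlow : ∀ r, a < r → C₀ * r ^ γ₀ ≤ m r) {z : ℝ} (hz : a ≤ z) :
    ∫ r in s₀..z, (z - r) / m r ≤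
      ((∫ r in s₀..a, (m r)⁻¹) + (C₀ * (1 - γ₀))⁻¹) * z ^ (2 - γ₀) := by
  have ha0 := hs₀.trans_le hs₀a
  have hz0 := ha0.trans_le hz
  have hinv : ContinuousOn (fun r => (m r)⁻¹) (Ioi 0) := hm.inv₀ fun r hr => (hpos r hr).ne'
  have hK : 0 ≤ ∫ r in s₀..a, (m r)⁻¹ :=
    intervalIntegral.integral_nonneg hs₀a fun r hr => (inv_pos.2 (hpos r (hs₀.trans_le hr.1))).le
  have hzpow : 1 ≤ z ^ (1 - γ₀) := Real.one_le_rpow (ha.trans hz) (by linarith)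
  have htail := integral_inv_le_of_rpow_le hm hpos ha0 hz hC₀ hγ₀ hlow
  calc ∫ r in s₀..z, (z - r) / m r ≤ z * ∫ r in s₀..z, (m r)⁻¹ :=
        integral_sub_div_le_mul_integral_inv hm hpos hs₀ (hs₀a.trans hz)
    _ = z * ((∫ r in s₀..a, (m r)⁻¹) + ∫ r in a..z, (m r)⁻¹) := by
        rw [intervalIntegral.integral_add_adjacent_intervals
          (hinv.intervalIntegrable_of_pos hs₀ ha0) (hinv.intervalIntegrable_of_pos ha0 hz0)]
    _ ≤ z * ((∫ r in s₀..a, (m r)⁻¹) * z ^ (1 - γ₀) + (C₀ * (1 - γ₀))⁻¹ * z ^ (1 - γ₀)) := by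
        gcongr
        exact le_mul_of_one_le_right hK hzpow
    _ = ((∫ r in s₀..a, (m r)⁻¹) + (C₀ * (1 - γ₀))⁻¹) * z ^ (2 - γ₀) := by
        rw [show (2 : ℝ) - γ₀ = 1 - γ₀ + 1 by ring, Real.rpow_add_one hz0.ne']
        ring

/-- Only `(z / 2, z)` is used, where the integrand is at least `√(2 / (C₁ z ^ γ₁))`. -/
theorem rpow_le_setIntegral_sqrt_two_div (hconc : ConcaveOn ℝ (Ioi 0) m)
    (hpos : ∀ x, 0 < x → 0 < m x) {a C₁ γ₁ z : ℝ} (ha : 0 < a) (hC₁ : 0 < C₁) (hγ₁ : 0 ≤ γ₁)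
    (hup : ∀ r, a < r → m r ≤ C₁ * r ^ γ₁) (hz : 2 * a ≤ z) :
    √(2 / C₁) / 2 * z ^ (1 - γ₁ / 2) ≤ ∫ r in Ioo 0 z, √(2 / m r) := by
  have hz0 : 0 < z := by linarith
  have hconst : ∀ r ∈ Ioo (z / 2) z, √(2 / (C₁ * z ^ γ₁)) ≤ √(2 / m r) := by
    rintro r ⟨hr₁, hr₂⟩
    have hr : 0 < r := by linarith
    have hmr := hpos r hr
    gcongr
    calc m r ≤ C₁ * r ^ γ₁ := hup r (by linarith)
      _ ≤ C₁ * z ^ γ₁ := by gcongr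
  have hint := integrableOn_sqrt_two_div_Ioo hconc hpos hz0
  have hhalf := setIntegral_ge_of_const_le_real measurableSet_Ioo measure_Ioo_lt_top.ne hconst
    (hint.mono_set (Ioo_subset_Ioo_left (by linarith)))
  have hsub : ∫ r in Ioo (z / 2) z, √(2 / m r) ≤ ∫ r in Ioo 0 z, √(2 / m r) :=
    setIntegral_mono_set hint (Eventually.of_forall fun _ => Real.sqrt_nonneg _)
      (Ioo_subset_Ioo_left (by linarith)).eventuallyLE
  have hzγ : 0 < z ^ (γ₁ / 2) := Real.rpow_pos_of_pos hz0 _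
  have heq : √(2 / (C₁ * z ^ γ₁)) * volume.real (Ioo (z / 2) z) =
      √(2 / C₁) / 2 * z ^ (1 - γ₁ / 2) := by
    rw [Real.volume_real_Ioo_of_le (by linarith), ← div_div, Real.sqrt_div' _ (by positivity),
      Real.sqrt_eq_rpow (z ^ γ₁), ← Real.rpow_mul hz0.le, Real.rpow_sub hz0, Real.rpow_one]
    field_simp
    ring
  linarith

theorem exists_integral_sub_div_le_mul_integral_sqrt_rpow (hconc : ConcaveOn ℝ (Ioi 0) m)
    (hpos : ∀ x, 0 < x → 0 < m x) {s₀ a C₀ C₁ γ₀ γ₁ p : ℝ} (hs₀ : 0 < s₀) (hs₀a : s₀ ≤ a)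
    (ha : 1 ≤ a) (hC₀ : 0 < C₀) (hC₁ : 0 < C₁) (hγ₀ : γ₀ < 1) (hγ₁ : 0 ≤ γ₁) (hp : 0 ≤ p)
    (hexp : 2 - γ₀ ≤ (1 - γ₁ / 2) * p) (hlow : ∀ r, a < r → C₀ * r ^ γ₀ ≤ m r)
    (hup : ∀ r, a < r → m r ≤ C₁ * r ^ γ₁) :
    ∃ D, 0 ≤ D ∧ ∀ z, 2 * a ≤ z →
      ∫ r in s₀..z, (z - r) / m r ≤ D * (∫ r in Ioo 0 z, √(2 / m r)) ^ p := by
  set A := (∫ r in s₀..a, (m r)⁻¹) + (C₀ * (1 - γ₀))⁻¹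
  set c := √(2 / C₁) / 2
  have hA : 0 ≤ A := add_nonneg (intervalIntegral.integral_nonneg hs₀a fun r hr =>
    (inv_pos.2 (hpos r (hs₀.trans_le hr.1))).le) (inv_pos.2 (mul_pos hC₀ (by linarith))).le
  have hc : 0 < c := by positivity
  have hD : 0 ≤ A / c ^ p := div_nonneg hA (Real.rpow_nonneg hc.le p)
  refine ⟨A / c ^ p, hD, fun z hz => ?_⟩
  have hz0 : 0 < z := by linarith
  calc ∫ r in s₀..z, (z - r) / m r ≤ A * z ^ (2 - γ₀) :=
        integral_sub_div_le_mul_rpow (hconc.continuousOn isOpen_Ioi) hpos hs₀ hs₀a ha hC₀ hγ₀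
          hlow (by linarith)
    _ ≤ A * z ^ ((1 - γ₁ / 2) * p) := by gcongr; linarith
    _ = A / c ^ p * (c * z ^ (1 - γ₁ / 2)) ^ p := by
        rw [Real.mul_rpow hc.le (by positivity), ← Real.rpow_mul hz0.le]
        field_simp
    _ ≤ A / c ^ p * (∫ r in Ioo 0 z, √(2 / m r)) ^ p := by
        refine mul_le_mul_of_nonneg_left (Real.rpow_le_rpow (by positivity) ?_ hp) hD
        exact rpow_le_setIntegral_sqrt_two_div hconc hpos (by linarith) hC₁ hγ₁ hup hz

end

theorem h_upper_bound_sobolev_exponent_general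
    (d : ℕ) (hd : 3 ≤ d)
    (m : ℝ → ℝ)
    (hm_c2 : ContDiffOn ℝ 2 m (Ioi 0))
    (hm_pos : ∀ z : ℝ, 0 < z → 0 < m z)
    (hm_conc : ∀ z : ℝ, 0 < z → deriv (deriv m) z ≤ 0)
    (s₀ : ℝ) (hs₀ : 0 < s₀)
    (ztilde C₀ C₁ γ₀ γ₁ : ℝ) (hzt : max s₀ 1 < ztilde)
    (hC₀ : 0 < C₀) (hC₁ : 0 < C₁)
    (hγ₀ : γ₀ ∈ Ico (0 : ℝ) 1) (hγ₁ : γ₁ ∈ Icc (0 : ℝ) 1)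
    (hexp : (2 - γ₀) / (2 - γ₁) < (d : ℝ) / ((d : ℝ) - 2))
    (hbound : ∀ z : ℝ, ztilde < z → C₀ * z ^ γ₀ ≤ m z ∧ m z ≤ C₁ * z ^ γ₁) :
    ∃ C : ℝ, 0 < C ∧ ∀ z : ℝ, 0 < z →
      (∫ r in s₀..z, (z - r) / m r) ≤
        C * (1 + (∫ r in Ioo (0 : ℝ) z, Real.sqrt (2 / m r))
          ^ (2 * (d : ℝ) / ((d : ℝ) - 2))) := by
  have hconc := hm_c2.concaveOn_of_deriv2_nonpos (convex_Ioi 0) isOpen_Ioi hm_conc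
  obtain ⟨hs₀zt, hzt1⟩ := max_lt_iff.1 hzt
  have hd2 : (0 : ℝ) < d - 2 := by
    have : (3 : ℝ) ≤ d := by exact_mod_cast hd
    linarith
  set p := 2 * (d : ℝ) / (d - 2)
  have hexp' : 2 - γ₀ ≤ (1 - γ₁ / 2) * p := by
    rw [div_lt_div_iff₀ (by linarith [hγ₁.2]) hd2] at hexp
    rw [mul_div_assoc', le_div_iff₀ hd2]
    linarith
  obtain ⟨D, hD, hlarge⟩ := exists_integral_sub_div_le_mul_integral_sqrt_rpow hconc hm_pos hs₀
    hs₀zt.le hzt1.le hC₀ hC₁ hγ₀.2 hγ₁.1 (by positivity) hexp' (fun r hr => (hbound r hr).1)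
    (fun r hr => (hbound r hr).2)
  set M := (2 * ztilde) ^ 3 / (s₀ * m (2 * ztilde))
  have hM : 0 < M := by have := hm_pos (2 * ztilde) (by linarith); positivity
  refine ⟨M + D, by positivity, fun z hz => ?_⟩
  have hf : 0 ≤ (∫ r in Ioo (0 : ℝ) z, √(2 / m r)) ^ p :=
    Real.rpow_nonneg (setIntegral_nonneg measurableSet_Ioo fun _ _ => Real.sqrt_nonneg _) p
  have hDf := mul_nonneg hD hf
  have hsplit : ∫ r in s₀..z, (z - r) / m r ≤ M + D * (∫ r in Ioo (0 : ℝ) z, √(2 / m r)) ^ p := by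
    rcases le_or_gt z (2 * ztilde) with hzZ | hzZ
    · linarith [le_abs_self (∫ r in s₀..z, (z - r) / m r),
        abs_integral_sub_div_le hconc hm_pos hs₀ (by linarith) hz hzZ]
    · linarith [hlarge z hzZ.le]
  nlinarith [mul_nonneg hM.le hf]

/-- Let `d ≥ 3` be an integer, `S = ∞`, `m` satisfying (M) on `(0,∞)`, and
suppose there are `z̃ > max(s₀,1)`, `C₀, C₁ > 0`, `γ₀ ∈ [0,1)`, `γ₁ ∈ [0,1]` with
`(2−γ₀)/(2−γ₁) < d/(d−2)` such that `C₀ z^{γ₀} ≤ m(z) ≤ C₁ z^{γ₁}` for all `z > z̃`.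
Then there is `C > 0` with `h(z) ≤ C (1 + f(z)^{2d/(d−2)})` for all `z > 0`, where
`f(z) := ∫₀^z √(2/m(r)) dr` and `h(z) := ∫_{s₀}^z (z−r)/m(r) dr`. -/
theorem h_upper_bound_sobolev_exponent
    (d : ℕ) (hd : 3 ≤ d)
    (m : ℝ → ℝ)
    (hm_c2 : ContDiffOn ℝ 2 m (Ioi 0))
    (hm_pos : ∀ z : ℝ, 0 < z → 0 < m z)
    (hm_conc : ∀ z : ℝ, 0 < z → deriv (deriv m) z ≤ 0)
    (hm0 : Tendsto m (𝓝[>] (0 : ℝ)) (𝓝 0))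
    (s₀ : ℝ) (hs₀ : 0 < s₀)
    (ztilde C₀ C₁ γ₀ γ₁ : ℝ) (hzt : max s₀ 1 < ztilde)
    (hC₀ : 0 < C₀) (hC₁ : 0 < C₁)
    (hγ₀ : γ₀ ∈ Ico (0 : ℝ) 1) (hγ₁ : γ₁ ∈ Icc (0 : ℝ) 1)
    (hexp : (2 - γ₀) / (2 - γ₁) < (d : ℝ) / ((d : ℝ) - 2))
    (hbound : ∀ z : ℝ, ztilde < z → C₀ * z ^ γ₀ ≤ m z ∧ m z ≤ C₁ * z ^ γ₁) :
    ∃ C : ℝ, 0 < C ∧ ∀ z : ℝ, 0 < z →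
      (∫ r in s₀..z, (z - r) / m r) ≤
        C * (1 + (∫ r in Ioo (0 : ℝ) z, Real.sqrt (2 / m r))
          ^ (2 * (d : ℝ) / ((d : ℝ) - 2))) :=
  h_upper_bound_sobolev_exponent_general d hd m hm_c2 hm_pos hm_conc s₀ hs₀ ztilde C₀ C₁ γ₀ γ₁ hzt
    hC₀ hC₁ hγ₀ hγ₁ hexp hbound
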